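/- arXiv:2002.07228 — 2 statements merged into one kernel-verified Lean document; each statement's English description precedes it below -/
import Mathlib

section
/- On D, the reduced angular Maxwell equations of Kerr–Newman hold: (e₁ + i e₂)(P^F) = −2 P^F H₁ and (e₁ + i e₂)(conj(P^F)) = −2 conj(P^F) H̲₁, where P^F := Q/q̄², H₁ := i a sin θ · q/|q|³ and H̲₁ := −i a sin θ · q̄/|q|³. -/
noncomputable section

namespace KerrNewman

/-- A point `x = (t, r, θ, φ)` of the coordinate domain, with indices `0,1,2,3`. -/
abbrev Pt : Type := Fin 4 → ℝ

/-- Partial derivative `∂_μ` of a complex-valued function on `ℝ⁴`. -/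
def pdC (μ : Fin 4) (f : Pt → ℂ) (x : Pt) : ℂ := fderiv ℝ f x (Pi.single μ 1)

/-- Partial derivative `∂_μ` of a real-valued function on `ℝ⁴`. -/
def pdR (μ : Fin 4) (f : Pt → ℝ) (x : Pt) : ℝ := fderiv ℝ f x (Pi.single μ 1)

/-- `Δ = r² − 2Mr + a² + Q²`. -/
def Del (M a Q : ℝ) (x : Pt) : ℝ := x 1 ^ 2 - 2 * M * x 1 + a ^ 2 + Q ^ 2

/-- `|q|² = r² + a² cos²θ`. -/
def q2 (a : ℝ) (x : Pt) : ℝ := x 1 ^ 2 + a ^ 2 * Real.cos (x 2) ^ 2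

/-- `q = r + i a cos θ`. -/
def qC (a : ℝ) (x : Pt) : ℂ := (x 1 : ℂ) + Complex.I * (a : ℂ) * (Real.cos (x 2) : ℂ)

/-- `q̄ = r − i a cos θ`. -/
def qbarC (a : ℝ) (x : Pt) : ℂ := (x 1 : ℂ) - Complex.I * (a : ℂ) * (Real.cos (x 2) : ℂ)

/-- `e₄ = ((r²+a²)/Δ)∂_t + ∂_r + (a/Δ)∂_φ` as an operator on complex functions. -/
def e4 (M a Q : ℝ) (f : Pt → ℂ) (x : Pt) : ℂ :=
  (((x 1 ^ 2 + a ^ 2) / Del M a Q x : ℝ) : ℂ) * pdC 0 f x + pdC 1 f x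
    + ((a / Del M a Q x : ℝ) : ℂ) * pdC 3 f x

/-- `e₃ = ((r²+a²)/|q|²)∂_t − (Δ/|q|²)∂_r + (a/|q|²)∂_φ` as an operator on
complex functions. -/
def e3 (M a Q : ℝ) (f : Pt → ℂ) (x : Pt) : ℂ :=
  (((x 1 ^ 2 + a ^ 2) / q2 a x : ℝ) : ℂ) * pdC 0 f x
    - ((Del M a Q x / q2 a x : ℝ) : ℂ) * pdC 1 f x
    + ((a / q2 a x : ℝ) : ℂ) * pdC 3 f x

/-- `e₁ = (1/√(|q|²))∂_θ` as an operator on complex functions. -/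
def e1 (a : ℝ) (f : Pt → ℂ) (x : Pt) : ℂ :=
  ((1 / Real.sqrt (q2 a x) : ℝ) : ℂ) * pdC 2 f x

/-- `e₂ = (a sinθ/√(|q|²))∂_t + (1/(√(|q|²) sinθ))∂_φ` as an operator on
complex functions. -/
def e2 (a : ℝ) (f : Pt → ℂ) (x : Pt) : ℂ :=
  ((a * Real.sin (x 2) / Real.sqrt (q2 a x) : ℝ) : ℂ) * pdC 0 f x
    + ((1 / (Real.sqrt (q2 a x) * Real.sin (x 2)) : ℝ) : ℂ) * pdC 3 f x

/-- `e₄` as an operator on real-valued functions. -/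
def e4R (M a Q : ℝ) (f : Pt → ℝ) (x : Pt) : ℝ :=
  ((x 1 ^ 2 + a ^ 2) / Del M a Q x) * pdR 0 f x + pdR 1 f x
    + (a / Del M a Q x) * pdR 3 f x

/-- `trX = 2/q`. -/
def trX (a : ℝ) (x : Pt) : ℂ := 2 / qC a x

/-- `tr X̲ = −2Δ/(q q̄²)`. -/
def trXb (M a Q : ℝ) (x : Pt) : ℂ :=
  -2 * ((Del M a Q x : ℝ) : ℂ) / (qC a x * qbarC a x ^ 2)

/-- `H₁ = i a sinθ · q / |q|³`. -/
def H1 (a : ℝ) (x : Pt) : ℂ :=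
  Complex.I * (a : ℂ) * (Real.sin (x 2) : ℂ) * qC a x
    / ((Real.sqrt (q2 a x) ^ 3 : ℝ) : ℂ)

/-- `H̲₁ = −i a sinθ · q̄ / |q|³`. -/
def Hb1 (a : ℝ) (x : Pt) : ℂ :=
  -(Complex.I * (a : ℂ) * (Real.sin (x 2) : ℂ) * qbarC a x
    / ((Real.sqrt (q2 a x) ^ 3 : ℝ) : ℂ))

/-- `Z₁ = i a sinθ · q̄ / |q|³`. -/
def Z1 (a : ℝ) (x : Pt) : ℂ :=
  Complex.I * (a : ℂ) * (Real.sin (x 2) : ℂ) * qbarC a x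
    / ((Real.sqrt (q2 a x) ^ 3 : ℝ) : ℂ)

/-- `P^F = Q/q̄²`. -/
def PF (a Q : ℝ) (x : Pt) : ℂ := (Q : ℂ) / qbarC a x ^ 2

/-- `P = −2M/q³ + 2Q²/(q³ q̄)`. -/
def Pc (M a Q : ℝ) (x : Pt) : ℂ :=
  -2 * (M : ℂ) / qC a x ^ 3 + 2 * (Q : ℂ) ^ 2 / (qC a x ^ 3 * qbarC a x)

/-- `ω̲ = (a² cos²θ (r−M) + Mr² − a²r − Q²r)/|q|⁴`. -/
def omb (M a Q : ℝ) (x : Pt) : ℝ :=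
  (a ^ 2 * Real.cos (x 2) ^ 2 * (x 1 - M) + M * x 1 ^ 2 - a ^ 2 * x 1 - Q ^ 2 * x 1)
    / q2 a x ^ 2

/-- `trχ̲ = −2rΔ/|q|⁴`. -/
def trchib (M a Q : ℝ) (x : Pt) : ℝ := -(2 * x 1 * Del M a Q x) / q2 a x ^ 2

/-- `atrχ̲ = 2aΔ cosθ/|q|⁴`. -/
def atrchib (M a Q : ℝ) (x : Pt) : ℝ :=
  2 * a * Del M a Q x * Real.cos (x 2) / q2 a x ^ 2

/-- `atrχ = 2a cosθ/|q|²`. -/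
def atrchi (a : ℝ) (x : Pt) : ℝ := 2 * a * Real.cos (x 2) / q2 a x

/-- `η₁ = −a² sinθ cosθ/|q|³`. -/
def eta1 (a : ℝ) (x : Pt) : ℝ :=
  -(a ^ 2 * Real.sin (x 2) * Real.cos (x 2)) / Real.sqrt (q2 a x) ^ 3

/-- `η₂ = a r sinθ/|q|³`. -/
def eta2 (a : ℝ) (x : Pt) : ℝ := a * x 1 * Real.sin (x 2) / Real.sqrt (q2 a x) ^ 3

/-- `η̲₁ = −a² sinθ cosθ/|q|³`. -/
def etab1 (a : ℝ) (x : Pt) : ℝ :=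
  -(a ^ 2 * Real.sin (x 2) * Real.cos (x 2)) / Real.sqrt (q2 a x) ^ 3

/-- `η̲₂ = −a r sinθ/|q|³`. -/
def etab2 (a : ℝ) (x : Pt) : ℝ := -(a * x 1 * Real.sin (x 2)) / Real.sqrt (q2 a x) ^ 3

/-- `*η₁ = a r sinθ/|q|³`. -/
def seta1 (a : ℝ) (x : Pt) : ℝ := a * x 1 * Real.sin (x 2) / Real.sqrt (q2 a x) ^ 3

/-- `*η₂ = a² sinθ cosθ/|q|³`. -/
def seta2 (a : ℝ) (x : Pt) : ℝ :=
  a ^ 2 * Real.sin (x 2) * Real.cos (x 2) / Real.sqrt (q2 a x) ^ 3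

/-- `*η̲₁ = −a r sinθ/|q|³`. -/
def setab1 (a : ℝ) (x : Pt) : ℝ := -(a * x 1 * Real.sin (x 2)) / Real.sqrt (q2 a x) ^ 3

/-- `*η̲₂ = a² sinθ cosθ/|q|³`. -/
def setab2 (a : ℝ) (x : Pt) : ℝ :=
  a ^ 2 * Real.sin (x 2) * Real.cos (x 2) / Real.sqrt (q2 a x) ^ 3

/-- `ρ = (−2Mr³ + 2Q²r² + 6Ma²r cos²θ − 2Q²a² cos²θ)/|q|⁶`. -/
def rho (M a Q : ℝ) (x : Pt) : ℝ :=
  (-2 * M * x 1 ^ 3 + 2 * Q ^ 2 * x 1 ^ 2 + 6 * M * a ^ 2 * x 1 * Real.cos (x 2) ^ 2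
      - 2 * Q ^ 2 * a ^ 2 * Real.cos (x 2) ^ 2) / q2 a x ^ 3

/-- `tr X̲ = trχ̲ − i atrχ̲` (component form). -/
def trXbC (M a Q : ℝ) (x : Pt) : ℂ :=
  ((trchib M a Q x : ℝ) : ℂ) - Complex.I * ((atrchib M a Q x : ℝ) : ℂ)

/-- `C = c·trχ̲ + i p·atrχ̲`. -/
def Cfun (M a Q c p : ℝ) (x : Pt) : ℂ :=
  ((c * trchib M a Q x : ℝ) : ℂ) + Complex.I * ((p : ℝ) : ℂ) * ((atrchib M a Q x : ℝ) : ℂ)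

/-!
The field `P^F = Q/q̄²` and its conjugate `Q/q²` depend on `(r, θ)` only, so `∂_t` and `∂_φ`
annihilate them and `e₁ + i e₂` acts on them as `|q|⁻¹ ∂_θ`. Since `∂_θ q̄ = i a sin θ`, this
gives `(e₁ + i e₂) P^F = −2 Q i a sin θ / (|q| q̄³)`, which is `−2 P^F H₁` because
`q q̄ = |q|²`; the conjugate equation is the same computation with `∂_θ q = −i a sin θ`.
-/

lemma pdC_comp {f : Pt → ℂ} {g : ℂ → ℂ} {g' : ℂ} {x : Pt} (μ : Fin 4)
    (hg : HasDerivAt g g' (f x)) (hf : DifferentiableAt ℝ f x) :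
    pdC μ (fun y => g (f y)) x = g' * pdC μ f x :=
  congrArg (fun L => L (Pi.single μ 1)) (hg.comp_hasFDerivAt x hf.hasFDerivAt).fderiv

lemma hasDerivAt_const_div_sq (Q : ℂ) {w : ℂ} (hw : w ≠ 0) :
    HasDerivAt (fun z => Q / z ^ 2) (-2 * Q / w ^ 3) w := by
  refine (((hasDerivAt_pow 2 w).inv (pow_ne_zero 2 hw)).const_mul Q).congr_deriv ?_
  field_simp
  norm_num
  ring

def rcos (c : ℂ) (y : Pt) : ℂ := (y 1 : ℂ) + c * (Real.cos (y 2) : ℂ)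

lemma qC_eq_rcos (a : ℝ) : qC a = rcos (Complex.I * a) := rfl

lemma qbarC_eq_rcos (a : ℝ) : qbarC a = rcos (-(Complex.I * a)) := by
  funext y
  rw [qbarC, rcos]
  ring

open ContinuousLinearMap in
lemma hasFDerivAt_rcos (c : ℂ) (x : Pt) :
    HasFDerivAt (rcos c) (Complex.ofRealCLM.comp (proj 1)
      + c • Complex.ofRealCLM.comp ((-Real.sin (x 2)) • proj 2)) x :=
  (Complex.ofRealCLM.comp (proj 1 : Pt →L[ℝ] ℝ)).hasFDerivAt.add
    ((Complex.ofRealCLM.hasFDerivAt.comp x (proj 2 : Pt →L[ℝ] ℝ).hasFDerivAt.cos).const_mul c)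

lemma pdC_zero_rcos (c : ℂ) (x : Pt) : pdC 0 (rcos c) x = 0 := by
  simp [pdC, (hasFDerivAt_rcos c x).fderiv]

lemma pdC_two_rcos (c : ℂ) (x : Pt) : pdC 2 (rcos c) x = -(c * Real.sin (x 2)) := by
  simp [pdC, (hasFDerivAt_rcos c x).fderiv]

lemma pdC_three_rcos (c : ℂ) (x : Pt) : pdC 3 (rcos c) x = 0 := by
  simp [pdC, (hasFDerivAt_rcos c x).fderiv]

lemma e1_add_I_mul_e2_comp_rcos {g : ℂ → ℂ} {g' : ℂ} (a : ℝ) (c : ℂ) (x : Pt)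
    (hg : HasDerivAt g g' (rcos c x)) :
    e1 a (fun y => g (rcos c y)) x + Complex.I * e2 a (fun y => g (rcos c y)) x
      = -(c * Real.sin (x 2)) * g' / (Real.sqrt (q2 a x) : ℂ) := by
  have hdiff := (hasFDerivAt_rcos c x).differentiableAt
  simp only [e1, e2, pdC_comp _ hg hdiff, pdC_zero_rcos, pdC_two_rcos, pdC_three_rcos]
  push_cast
  ring

lemma rcos_ne_zero {c : ℂ} (hc : c.re = 0) {x : Pt} (hr : 0 < x 1) : rcos c x ≠ 0 := by
  intro h
  have hre := congrArg Complex.re h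
  simp [rcos, hc] at hre
  exact hr.ne' hre

lemma q2_pos (a : ℝ) {x : Pt} (hr : 0 < x 1) : 0 < q2 a x := by
  unfold q2
  positivity

lemma qC_mul_qbarC (a : ℝ) (x : Pt) : qC a x * qbarC a x = (q2 a x : ℂ) := by
  simp only [qC, qbarC, q2, Complex.ofReal_add, Complex.ofReal_mul, Complex.ofReal_pow]
  linear_combination (-(a : ℂ) ^ 2 * (Real.cos (x 2) : ℂ) ^ 2) * Complex.I_sq

lemma PF_eq_comp_rcos (a Q : ℝ) :
    PF a Q = fun y => (Q : ℂ) / rcos (-(Complex.I * a)) y ^ 2 := by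
  rw [← qbarC_eq_rcos]
  rfl

lemma conj_PF_eq_comp_rcos (a Q : ℝ) :
    (fun y => (starRingEnd ℂ) (PF a Q y)) = fun y => (Q : ℂ) / rcos (Complex.I * a) y ^ 2 := by
  funext y
  simp only [PF, qbarC, rcos, map_div₀, map_pow, map_sub, map_mul, Complex.conj_I,
    Complex.conj_ofReal]
  ring

theorem maxwell_angular_PF_general (a Q : ℝ) (x : Pt)
    (hr : 0 < x 1) :
    e1 a (PF a Q) x + Complex.I * e2 a (PF a Q) x = -2 * PF a Q x * H1 a x ∧
    e1 a (fun y => (starRingEnd ℂ) (PF a Q y)) x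
        + Complex.I * e2 a (fun y => (starRingEnd ℂ) (PF a Q y)) x
      = -2 * (starRingEnd ℂ) (PF a Q x) * Hb1 a x := by
  have hq : rcos (Complex.I * a) x ≠ 0 := rcos_ne_zero (by simp) hr
  have hqb : rcos (-(Complex.I * a)) x ≠ 0 := rcos_ne_zero (by simp) hr
  have hnorm : (Real.sqrt (q2 a x) : ℂ) ≠ 0 := by
    exact_mod_cast (Real.sqrt_pos.mpr (q2_pos a hr)).ne'
  have hnorm_sq :
      (Real.sqrt (q2 a x) : ℂ) ^ 2 = rcos (Complex.I * a) x * rcos (-(Complex.I * a)) x := by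
    rw [← qC_eq_rcos, ← qbarC_eq_rcos, qC_mul_qbarC, ← Complex.ofReal_pow,
      Real.sq_sqrt (q2_pos a hr).le]
  constructor
  · rw [PF_eq_comp_rcos, e1_add_I_mul_e2_comp_rcos a _ x (hasDerivAt_const_div_sq Q hqb), H1,
      qC_eq_rcos]
    push_cast
    field_simp
    linear_combination (-(a * Complex.sin (x 2) * Q)) * hnorm_sq
  · rw [congrFun (conj_PF_eq_comp_rcos a Q) x, conj_PF_eq_comp_rcos,
      e1_add_I_mul_e2_comp_rcos a _ x (hasDerivAt_const_div_sq Q hq), Hb1, qbarC_eq_rcos]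
    push_cast
    field_simp
    linear_combination (a * Complex.sin (x 2) * Q) * hnorm_sq

/-- on `D`, the reduced angular Maxwell equations of Kerr–Newman hold:
`(e₁+ie₂)(P^F) = −2 P^F H₁` and `(e₁+ie₂)(conj(P^F)) = −2 conj(P^F) H̲₁`. -/
theorem maxwell_angular_PF (M a Q : ℝ) (x : Pt)
    (hr : 0 < x 1) (hθ₀ : 0 < x 2) (hθπ : x 2 < Real.pi)
    (hΔ : Del M a Q x ≠ 0) :
    e1 a (PF a Q) x + Complex.I * e2 a (PF a Q) x = -2 * PF a Q x * H1 a x ∧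
    e1 a (fun y => (starRingEnd ℂ) (PF a Q y)) x
        + Complex.I * e2 a (fun y => (starRingEnd ℂ) (PF a Q y)) x
      = -2 * (starRingEnd ℂ) (PF a Q x) * Hb1 a x :=
  maxwell_angular_PF_general a Q x hr
end KerrNewman
end
end

section
/- On D, the reduced Bianchi transport equations of Kerr–Newman hold: e₄(P) = −(3/2) trX · P − trX · P^F · conj(P^F) and e₃(P) = −(3/2) conj(tr X̲) · P − conj(tr X̲) · P^F · conj(P^F), where P := −2M/q³ + 2Q²/(q³ q̄), P^F := Q/q̄², trX := 2/q and tr X̲ := −2Δ/(q q̄²). -/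
noncomputable section

namespace KerrNewman

/-!
`P` depends on the point only through `q` and `q̄`, hence only on `r` and `θ`: its `∂_t` and
`∂_φ` derivatives vanish, so `e₄(P) = ∂_r P` and `e₃(P) = −(Δ/|q|²) ∂_r P`. Moving along `r`
shifts `q` and `q̄` by the same real amount, which makes `∂_r P` an explicit rational function of
`q, q̄`, equal to `−(3/2) trX · P − trX · P^F · conj(P^F)`. Finally
`conj(tr X̲) = −(Δ/|q|²) trX` because `|q|² = q q̄`, so the `e₃` equation is the `e₄` one scaled
by `−Δ/|q|²`.
-/

section PartialDerivative

variable {f : Pt → ℂ} {x : Pt} {μ : Fin 4}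

theorem add_smul_single_apply_of_ne {i : Fin 4} (t : ℝ) (h : i ≠ μ) :
    (x + t • (Pi.single μ 1 : Pt)) i = x i := by
  simp [h]

theorem add_smul_single_apply_self (t : ℝ) :
    (x + t • (Pi.single μ 1 : Pt)) μ = x μ + t := by
  simp

theorem pdC_eq_of_hasLineDerivAt {f' : ℂ} (hf : DifferentiableAt ℝ f x)
    (h : HasLineDerivAt ℝ f f' x (Pi.single μ 1)) : pdC μ f x = f' :=
  (hf.hasFDerivAt.hasLineDerivAt _).unique h

theorem pdC_eq_zero_of_forall_add_smul_single
    (h : ∀ t : ℝ, f (x + t • Pi.single μ 1) = f x) : pdC μ f x = 0 := by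
  by_cases hf : DifferentiableAt ℝ f x
  · refine pdC_eq_of_hasLineDerivAt hf ?_
    simpa only [HasLineDerivAt, h] using hasDerivAt_const (0 : ℝ) (f x)
  · simp [pdC, fderiv_zero_of_not_differentiableAt hf]

end PartialDerivative

section Coordinates

variable (a : ℝ) (x : Pt)

theorem conj_qC : starRingEnd ℂ (qC a x) = qbarC a x := by
  simp only [qC, qbarC, map_add, map_mul, Complex.conj_ofReal, Complex.conj_I]
  ring

theorem conj_qbarC : starRingEnd ℂ (qbarC a x) = qC a x := by
  rw [← conj_qC, Complex.conj_conj]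

theorem ofReal_q2 : ((q2 a x : ℝ) : ℂ) = qC a x * qbarC a x := by
  simp only [q2, qC, qbarC, Complex.ofReal_add, Complex.ofReal_mul, Complex.ofReal_pow]
  linear_combination (↑a * ↑(Real.cos (x 2))) ^ 2 * Complex.I_sq

variable {a x}

theorem qC_ne_zero (hr : x 1 ≠ 0) : qC a x ≠ 0 := fun h ↦ hr <| by
  simpa [qC] using congrArg Complex.re h

theorem qbarC_ne_zero (hr : x 1 ≠ 0) : qbarC a x ≠ 0 := by
  rw [← conj_qC]
  exact (map_ne_zero _).2 (qC_ne_zero hr)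

theorem differentiableAt_Pc (M Q : ℝ) (hr : x 1 ≠ 0) : DifferentiableAt ℝ (Pc M a Q) x := by
  have hq : DifferentiableAt ℝ (qC a) x := by unfold qC; fun_prop
  have hqb : DifferentiableAt ℝ (qbarC a) x := by unfold qbarC; fun_prop
  have hq0 := qC_ne_zero (a := a) hr
  have hqb0 := qbarC_ne_zero (a := a) hr
  unfold Pc
  fun_prop (disch := simp [*])

end Coordinates

section Transport

variable {M a Q : ℝ} {x : Pt}

theorem Pc_add_smul_single {μ : Fin 4} (t : ℝ) (h1 : μ ≠ 1) (h2 : μ ≠ 2) :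
    Pc M a Q (x + t • Pi.single μ 1) = Pc M a Q x := by
  simp only [Pc, qC, qbarC, add_smul_single_apply_of_ne t h1.symm,
    add_smul_single_apply_of_ne t h2.symm]

theorem pdC_Pc_eq_zero {μ : Fin 4} (h1 : μ ≠ 1) (h2 : μ ≠ 2) : pdC μ (Pc M a Q) x = 0 :=
  pdC_eq_zero_of_forall_add_smul_single fun t ↦ Pc_add_smul_single t h1 h2

theorem qC_add_smul_single_one (t : ℝ) : qC a (x + t • Pi.single 1 1) = qC a x + t := by
  simp only [qC, add_smul_single_apply_self,
    add_smul_single_apply_of_ne t (show (2 : Fin 4) ≠ 1 by decide), Complex.ofReal_add]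
  ring

theorem qbarC_add_smul_single_one (t : ℝ) :
    qbarC a (x + t • Pi.single 1 1) = qbarC a x + t := by
  simp only [qbarC, add_smul_single_apply_self,
    add_smul_single_apply_of_ne t (show (2 : Fin 4) ≠ 1 by decide), Complex.ofReal_add]
  ring

theorem conj_PF : starRingEnd ℂ (PF a Q x) = Q / qC a x ^ 2 := by
  simp [PF, conj_qbarC]

theorem hasLineDerivAt_Pc_radial (hr : x 1 ≠ 0) :
    HasLineDerivAt ℝ (Pc M a Q)
      (-(3 / 2) * trX a x * Pc M a Q x - trX a x * PF a Q x * starRingEnd ℂ (PF a Q x))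
      x (Pi.single 1 1) := by
  have hz := qC_ne_zero (a := a) hr
  have hw := qbarC_ne_zero (a := a) hr
  rw [conj_PF]
  simp only [HasLineDerivAt, Pc, trX, PF, qC_add_smul_single_one, qbarC_add_smul_single_one]
  set z := qC a x
  set w := qbarC a x
  have hshift (c : ℂ) : HasDerivAt (fun t : ℝ ↦ c + t) 1 0 := by
    simpa using ((hasDerivAt_id (0 : ℝ)).ofReal_comp).const_add c
  have hz3 : HasDerivAt (fun t : ℝ ↦ (z + t) ^ 3) (3 * z ^ 2) 0 := by
    simpa using (hshift z).fun_pow 3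
  have hP := ((hasDerivAt_const (0 : ℝ) (-2 * (M : ℂ))).fun_div hz3 (by simpa using hz)).fun_add
    ((hasDerivAt_const (0 : ℝ) (2 * (Q : ℂ) ^ 2)).fun_div (hz3.fun_mul (hshift w))
      (by simpa using And.intro hz hw))
  convert hP using 1
  simp only [Complex.ofReal_zero, add_zero]
  field_simp
  ring

theorem pdC_one_Pc (hr : x 1 ≠ 0) :
    pdC 1 (Pc M a Q) x
      = -(3 / 2) * trX a x * Pc M a Q x - trX a x * PF a Q x * starRingEnd ℂ (PF a Q x) :=
  pdC_eq_of_hasLineDerivAt (differentiableAt_Pc M Q hr) (hasLineDerivAt_Pc_radial hr)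

end Transport

theorem conj_trXb (M a Q : ℝ) (x : Pt) :
    starRingEnd ℂ (trXb M a Q x) = -((Del M a Q x / q2 a x : ℝ) : ℂ) * trX a x := by
  simp only [trXb, trX, map_div₀, map_mul, map_neg, map_pow, map_ofNat, Complex.conj_ofReal,
    conj_qC, conj_qbarC, Complex.ofReal_div, ofReal_q2]
  ring

theorem bianchi_transport_P_general (M a Q : ℝ) (x : Pt)
    (hr : 0 < x 1) :
    e4 M a Q (Pc M a Q) x
      = -(3 / 2) * trX a x * Pc M a Q x
        - trX a x * PF a Q x * (starRingEnd ℂ) (PF a Q x) ∧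
    e3 M a Q (Pc M a Q) x
      = -(3 / 2) * (starRingEnd ℂ) (trXb M a Q x) * Pc M a Q x
        - (starRingEnd ℂ) (trXb M a Q x) * PF a Q x * (starRingEnd ℂ) (PF a Q x) := by
  have ht : pdC 0 (Pc M a Q) x = 0 := pdC_Pc_eq_zero (by decide) (by decide)
  have hφ : pdC 3 (Pc M a Q) x = 0 := pdC_Pc_eq_zero (by decide) (by decide)
  have hrad := pdC_one_Pc (M := M) (a := a) (Q := Q) hr.ne'
  refine ⟨?_, ?_⟩
  · simp only [e4, ht, hφ, hrad, mul_zero, zero_add, add_zero]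
  · rw [e3, ht, hφ, hrad, conj_trXb]
    ring

/-- on `D`, the reduced Bianchi transport equations of Kerr–Newman hold:
`e₄(P) = −(3/2) trX·P − trX·P^F·conj(P^F)` and
`e₃(P) = −(3/2) conj(tr X̲)·P − conj(tr X̲)·P^F·conj(P^F)`. -/
theorem bianchi_transport_P (M a Q : ℝ) (x : Pt)
    (hr : 0 < x 1) (hθ₀ : 0 < x 2) (hθπ : x 2 < Real.pi)
    (hΔ : Del M a Q x ≠ 0) :
    e4 M a Q (Pc M a Q) x
      = -(3 / 2) * trX a x * Pc M a Q x
        - trX a x * PF a Q x * (starRingEnd ℂ) (PF a Q x) ∧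
    e3 M a Q (Pc M a Q) x
      = -(3 / 2) * (starRingEnd ℂ) (trXb M a Q x) * Pc M a Q x
        - (starRingEnd ℂ) (trXb M a Q x) * PF a Q x * (starRingEnd ℂ) (PF a Q x) :=
  bianchi_transport_P_general M a Q x hr

end KerrNewman
end
end
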